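/- Let k : (0,∞) → [0,∞) be nonincreasing and integrable, and let F : (0,∞) → [0,∞) be measurable. Then ∫_0^∞ k(s) F(s) ds ≤ 2 · (sup_{r>0} (1/r) ∫_0^r F(s) ds) · ∫_0^∞ k(s) ds. -/

import Mathlib

open MeasureTheory Real Complex Filter
open scoped ENNReal Topology FourierTransform RealInnerProductSpace

noncomputable section

/-- The symbol class `𝕊(γ, κ, M)`: complex-valued measurable symbols `ψ(t,ξ)` with
`Re[-ψ(t,ξ)] ≥ κ|ξ|^γ` and `|D^α_ξ ψ(t,ξ)| ≤ M |ξ|^(γ-|α|)` for `|α| ≤ ⌊d/2⌋+1`, `ξ ≠ 0`. -/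
def IsSymbol (d : ℕ) (γ κ M : ℝ) (ψ : ℝ → EuclideanSpace ℝ (Fin d) → ℂ) : Prop :=
  Measurable (Function.uncurry ψ) ∧
  (∀ t ξ, κ * ‖ξ‖ ^ γ ≤ (-(ψ t ξ)).re) ∧
  (∀ t, ContDiffOn ℝ (d / 2 + 1 : ℕ) (ψ t) {ξ | ξ ≠ 0}) ∧
  (∀ t (n : ℕ), n ≤ d / 2 + 1 → ∀ ξ : EuclideanSpace ℝ (Fin d), ξ ≠ 0 →
    ‖iteratedFDerivWithin ℝ n (ψ t) {ζ : EuclideanSpace ℝ (Fin d) | ζ ≠ 0} ξ‖ ≤ M * ‖ξ‖ ^ (γ - n))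

/-- The fundamental solution `p(t,s,x) = (2π)^{-d} ∫ exp(∫_s^t ψ(r,ξ) dr) e^{i x·ξ} dξ`. -/
def fundSol {d : ℕ} (ψ : ℝ → EuclideanSpace ℝ (Fin d) → ℂ) (t s : ℝ)
    (x : EuclideanSpace ℝ (Fin d)) : ℂ :=
  ((2 * π) ^ d : ℝ)⁻¹ • ∫ ξ : EuclideanSpace ℝ (Fin d),
    Complex.exp (∫ r in s..t, ψ r ξ) * Complex.exp (Complex.I * (⟪x, ξ⟫ : ℝ))

/-- `q(t,s,x) = ∂_t p(t,s,x) = (2π)^{-d} ∫ ψ(t,ξ) exp(∫_s^t ψ(r,ξ) dr) e^{i x·ξ} dξ`. -/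
def fundSolDt {d : ℕ} (ψ : ℝ → EuclideanSpace ℝ (Fin d) → ℂ) (t s : ℝ)
    (x : EuclideanSpace ℝ (Fin d)) : ℂ :=
  ((2 * π) ^ d : ℝ)⁻¹ • ∫ ξ : EuclideanSpace ℝ (Fin d),
    ψ t ξ * Complex.exp (∫ r in s..t, ψ r ξ) * Complex.exp (Complex.I * (⟪x, ξ⟫ : ℝ))

/-- `Ψ_j(x) := 2^{jd} Ψ(2^j x)` for `j : ℤ`. -/
def LPkernel {d : ℕ} (Ψ : EuclideanSpace ℝ (Fin d) → ℂ) (j : ℤ)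
    (x : EuclideanSpace ℝ (Fin d)) : ℂ :=
  ((2 : ℝ) ^ (j * (d : ℤ))) • Ψ (((2 : ℝ) ^ j) • x)

/-- `Φ(x) := Σ_{j ≤ 0} Ψ_j(x)`. -/
def LPPhi {d : ℕ} (Ψ : EuclideanSpace ℝ (Fin d) → ℂ)
    (x : EuclideanSpace ℝ (Fin d)) : ℂ :=
  ∑' j : {n : ℤ // n ≤ 0}, LPkernel Ψ (j : ℤ) x

/-- convolution `g ∗ f (x) = ∫ g(y) f(x-y) dy`. -/
def conv {d : ℕ} (g f : EuclideanSpace ℝ (Fin d) → ℂ)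
    (x : EuclideanSpace ℝ (Fin d)) : ℂ :=
  ∫ y, g y * f (x - y)

/-- A Littlewood–Paley generating function: a Schwartz function whose Fourier transform is
nonnegative, supported in the annulus `{1/2 ≤ |ξ| ≤ 2}`, with `Σ_j ℱΨ(2^{-j} ξ) = 1` for `ξ ≠ 0`. -/
structure IsLPSystem (d : ℕ) (Ψ : EuclideanSpace ℝ (Fin d) → ℂ) : Prop where
  schwartz : ∃ Ψ' : SchwartzMap (EuclideanSpace ℝ (Fin d)) ℂ, Ψ = ⇑Ψ'
  real_nonneg : ∀ ξ, (𝓕 Ψ ξ).im = 0 ∧ 0 ≤ (𝓕 Ψ ξ).re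
  support : ∀ ξ, 𝓕 Ψ ξ ≠ 0 → 1 / 2 ≤ ‖ξ‖ ∧ ‖ξ‖ ≤ 2
  sum_one : ∀ ξ : EuclideanSpace ℝ (Fin d), ξ ≠ 0 →
    HasSum (fun j : ℤ => 𝓕 Ψ (((2 : ℝ) ^ (-j)) • ξ)) 1

/-- `L^∞`-norm. -/
def LinfNorm {d : ℕ} (f : EuclideanSpace ℝ (Fin d) → ℂ) : ℝ≥0∞ := eLpNorm f ∞ volume

/-- The Lipschitz-space norm `‖f‖_{Λ^θ} = ‖S₀ f‖_∞ + sup_{j ≥ 1} θ(2^j) ‖Δ_j f‖_∞`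
(Littlewood–Paley characterization). -/
def LambdaNorm {d : ℕ} (Ψ : EuclideanSpace ℝ (Fin d) → ℂ) (θ : ℝ → ℝ)
    (f : EuclideanSpace ℝ (Fin d) → ℂ) : ℝ≥0∞ :=
  LinfNorm (conv (LPPhi Ψ) f) +
    ⨆ j : ℕ, ENNReal.ofReal (θ ((2 : ℝ) ^ (j + 1))) *
      LinfNorm (conv (LPkernel Ψ ((j : ℤ) + 1)) f)

/-- The norm `‖f‖_{Λ_p^θ} = ‖S₀ f‖_∞ + (Σ_{j ≥ 1} θ(2^j)^p ‖Δ_j f‖_∞^p)^{1/p}`, with `Λ_∞^θ = Λ^θ`. -/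
def LambdaPNorm {d : ℕ} (Ψ : EuclideanSpace ℝ (Fin d) → ℂ) (θ : ℝ → ℝ) (p : ℝ≥0∞)
    (f : EuclideanSpace ℝ (Fin d) → ℂ) : ℝ≥0∞ :=
  if p = ∞ then LambdaNorm Ψ θ f
  else LinfNorm (conv (LPPhi Ψ) f) +
    (∑' j : ℕ, (ENNReal.ofReal (θ ((2 : ℝ) ^ (j + 1))) *
      LinfNorm (conv (LPkernel Ψ ((j : ℤ) + 1)) f)) ^ p.toReal) ^ (1 / p.toReal)

/-- Weighted mixed norm `‖u‖_{L_p((0,T), w dt; X)}` for an `X`-norm process `G t = ‖u(t,·)‖_X`. -/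
def mixedLpNorm (p : ℝ≥0∞) (w : ℝ → ℝ) (T : ℝ) (G : ℝ → ℝ≥0∞) : ℝ≥0∞ :=
  if p = ∞ then essSup G (volume.restrict (Set.Ioo 0 T))
  else (∫⁻ t in Set.Ioo 0 T, G t ^ p.toReal * ENNReal.ofReal (w t)) ^ (1 / p.toReal)

/-- The class `I_o(0, L)`: positive `φ` with `s_φ(λ) = o(1)` as `λ ↓ 0` and
`s_φ(λ) = o(λ^L)` as `λ ↑ ∞`, where `s_φ(λ) = sup_{t > 0} φ(λ t)/φ(t)`. -/
def InClassIo (L : ℝ) (φ : ℝ → ℝ) : Prop :=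
  (∀ t, 0 < t → 0 < φ t) ∧
  (∀ ε, 0 < ε → ∃ δ, 0 < δ ∧ ∀ lam t, 0 < lam → lam < δ → 0 < t →
    φ (lam * t) ≤ ε * φ t) ∧
  (∀ ε, 0 < ε → ∃ R, 0 < R ∧ ∀ lam t, R < lam → 0 < t →
    φ (lam * t) ≤ ε * lam ^ L * φ t)

/-- `φ_γ(λ) := φ(λ) λ^γ`. -/
def phiGamma (φ : ℝ → ℝ) (γ : ℝ) : ℝ → ℝ := fun lam => φ lam * lam ^ γ

/-- `W(t) := ∫_0^t w(s) ds`. -/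
def weightW (w : ℝ → ℝ) (t : ℝ) : ℝ := ∫ s in Set.Ioo (0 : ℝ) t, w s

/-- `φ_{γ,p,w}(λ) := φ(λ) λ^γ W(λ^{-γ})^{1/p}` (with `1/∞ := 0`). -/
def phiGammaPW (φ : ℝ → ℝ) (γ : ℝ) (p : ℝ≥0∞) (w : ℝ → ℝ) : ℝ → ℝ :=
  fun lam => φ lam * lam ^ γ * (weightW w (lam ^ (-γ))) ^ (1 / p.toReal)

/-- Centered Hardy–Littlewood maximal function on `ℝ` of an `ℝ≥0∞`-valued function. -/
def maximalFn (G : ℝ → ℝ≥0∞) (t : ℝ) : ℝ≥0∞ :=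
  ⨆ r : {r : ℝ // 0 < r}, (∫⁻ s in Set.Ioo (t - r) (t + r), G s) / ENNReal.ofReal (2 * r)

/-- Muckenhoupt class `A_q(ℝ)` for `q ∈ [1,∞)`. -/
def IsApWeight (q : ℝ) (w : ℝ → ℝ) : Prop :=
  (∀ t, 0 ≤ w t) ∧ LocallyIntegrable w volume ∧
  (if q = 1 then
    ∃ C : ℝ, ∀ t, maximalFn (fun s => ENNReal.ofReal (w s)) t ≤ ENNReal.ofReal (C * w t)
  else
    ∃ C : ℝ, ∀ a b : ℝ, a < b →
      ((∫ t in Set.Ioo a b, w t) / (b - a)) *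
        (((∫ t in Set.Ioo a b, w t ^ (-1 / (q - 1))) / (b - a)) ^ (q - 1)) ≤ C)

/-- `w ∈ A_p(ℝ)` for `p ∈ [1,∞]`, where `A_∞ = ∪_{q ∈ [1,∞)} A_q`. -/
def IsMuckenhoupt (p : ℝ≥0∞) (w : ℝ → ℝ) : Prop :=
  if p = ∞ then ∃ q : ℝ, 1 ≤ q ∧ IsApWeight q w else IsApWeight p.toReal w

/-- `ψ_j(t, -i∇) f (x) := Σ_{k=-1}^1 ∫ ℱ^{-1}[ψ(t,·) ℱ Ψ_{j+k}](y) Δ_j f(x - y) dy`. -/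
def pdOpJ {d : ℕ} (Ψ : EuclideanSpace ℝ (Fin d) → ℂ)
    (ψ : ℝ → EuclideanSpace ℝ (Fin d) → ℂ) (t : ℝ)
    (f : EuclideanSpace ℝ (Fin d) → ℂ) (j : ℤ) (x : EuclideanSpace ℝ (Fin d)) : ℂ :=
  ∑ k ∈ Finset.Icc (-1 : ℤ) 1,
    ∫ y, 𝓕⁻ (fun ξ => ψ t ξ * 𝓕 (LPkernel Ψ (j + k)) ξ) y * conv (LPkernel Ψ j) f (x - y)

/-- `ψ₀(t, -i∇) f (x) := ∫ ℱ^{-1}[ψ(t,·) ℱ(Φ + Ψ₁)](y) S₀ f(x - y) dy`. -/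
def pdOp0 {d : ℕ} (Ψ : EuclideanSpace ℝ (Fin d) → ℂ)
    (ψ : ℝ → EuclideanSpace ℝ (Fin d) → ℂ) (t : ℝ)
    (f : EuclideanSpace ℝ (Fin d) → ℂ) (x : EuclideanSpace ℝ (Fin d)) : ℂ :=
  ∫ y, 𝓕⁻ (fun ξ => ψ t ξ * 𝓕 (fun z => LPPhi Ψ z + LPkernel Ψ 1 z) ξ) y *
    conv (LPPhi Ψ) f (x - y)

/-- `ψ(t, -i∇) f := ψ₀(t,-i∇) f + Σ_{j ≥ 1} ψ_j(t,-i∇) f`. -/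
def pdOp {d : ℕ} (Ψ : EuclideanSpace ℝ (Fin d) → ℂ)
    (ψ : ℝ → EuclideanSpace ℝ (Fin d) → ℂ) (t : ℝ)
    (f : EuclideanSpace ℝ (Fin d) → ℂ) (x : EuclideanSpace ℝ (Fin d)) : ℂ :=
  pdOp0 Ψ ψ t f x + ∑' j : ℕ, pdOpJ Ψ ψ t f ((j : ℤ) + 1) x

/-- `𝒢 f(t,x) := ∫_0^t ∫ p(t,s,x-y) f(s,y) dy ds`. -/
def Gop {d : ℕ} (ψ : ℝ → EuclideanSpace ℝ (Fin d) → ℂ)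
    (f : ℝ → EuclideanSpace ℝ (Fin d) → ℂ) (t : ℝ) (x : EuclideanSpace ℝ (Fin d)) : ℂ :=
  ∫ s in Set.Ioo (0 : ℝ) t, ∫ y, fundSol ψ t s (x - y) * f s y

/-- `𝒢₀ u₀(t,x) := ∫ p(t,0,x-y) u₀(y) dy`. -/
def G0op {d : ℕ} (ψ : ℝ → EuclideanSpace ℝ (Fin d) → ℂ)
    (u₀ : EuclideanSpace ℝ (Fin d) → ℂ) (t : ℝ) (x : EuclideanSpace ℝ (Fin d)) : ℂ :=
  ∫ y, fundSol ψ t 0 (x - y) * u₀ y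

/-- The mild solution `u(t,x) = ∫ p(t,0,x-y) u₀(y) dy + ∫_0^t ∫ p(t,s,x-y) f(s,y) dy ds`,
with `p(0,0,·) = δ₀`. -/
def mildSol {d : ℕ} (ψ : ℝ → EuclideanSpace ℝ (Fin d) → ℂ)
    (u₀ : EuclideanSpace ℝ (Fin d) → ℂ) (f : ℝ → EuclideanSpace ℝ (Fin d) → ℂ)
    (t : ℝ) (x : EuclideanSpace ℝ (Fin d)) : ℂ :=
  if t = 0 then u₀ x else G0op ψ u₀ t x + Gop ψ f t x

/-- bounded measurable functions. -/
def BddMeasurable {d : ℕ} (f : EuclideanSpace ℝ (Fin d) → ℂ) : Prop :=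
  Measurable f ∧ ∃ B : ℝ, ∀ x, ‖f x‖ ≤ B

/-- `W̃(s,t)^{1-1/p} = (∫_s^t w^{-1/(p-1)})^{1-1/p}`, with the conventions for `p = ∞`. -/
def Wtilde (p : ℝ≥0∞) (w : ℝ → ℝ) (s t : ℝ) : ℝ :=
  if p = ∞ then t - s
  else (∫ r in Set.Ioo s t, w r ^ (-1 / (p.toReal - 1))) ^ (1 - 1 / p.toReal)

/-- `n`-fold mixed difference `𝒟^n_{(h₁,h₂)} u`. -/
def mixDiffIter {d : ℕ} (n : ℕ) (h₁ : ℝ) (h₂ : EuclideanSpace ℝ (Fin d))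
    (u : ℝ → EuclideanSpace ℝ (Fin d) → ℂ) : ℝ → EuclideanSpace ℝ (Fin d) → ℂ :=
  (fun v (t : ℝ) (x : EuclideanSpace ℝ (Fin d)) => v (t + h₁) (x + h₂) - v t x)^[n] u

/-- The norm `‖u‖_{𝐇^{φ,γ}_{p,w}((0,T)×ℝ^d)}` relative to a decomposition `(u, u₀, f)`. -/
def HNorm {d : ℕ} (Ψ : EuclideanSpace ℝ (Fin d) → ℂ) (φ : ℝ → ℝ) (γ : ℝ)
    (p : ℝ≥0∞) (w : ℝ → ℝ) (T : ℝ) (u : ℝ → EuclideanSpace ℝ (Fin d) → ℂ)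
    (u₀ : EuclideanSpace ℝ (Fin d) → ℂ) (f : ℝ → EuclideanSpace ℝ (Fin d) → ℂ) : ℝ≥0∞ :=
  mixedLpNorm p w T (fun t => LambdaNorm Ψ (phiGamma φ γ) (u t)) +
    LambdaPNorm Ψ (phiGammaPW φ γ p w) p u₀ +
    mixedLpNorm p w T (fun t => LambdaNorm Ψ φ (f t))

/-- `‖a‖_{ℓ_∞^θ(A)} := sup_n θ(2^n) ‖a_n‖`. -/
def seqSupNorm {A : Type*} [NormedAddCommGroup A] (θ : ℝ → ℝ) (a : ℤ → A) : ℝ≥0∞ :=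
  ⨆ n : ℤ, ENNReal.ofReal (θ ((2 : ℝ) ^ n)) * (‖a n‖₊ : ℝ≥0∞)

/-- `‖a‖_{ℓ_1^θ(A)} := Σ_n θ(2^n) ‖a_n‖`. -/
def seqL1Norm {A : Type*} [NormedAddCommGroup A] (θ : ℝ → ℝ) (a : ℤ → A) : ℝ≥0∞ :=
  ∑' n : ℤ, ENNReal.ofReal (θ ((2 : ℝ) ^ n)) * (‖a n‖₊ : ℝ≥0∞)

/-- `K(t,a) = inf {‖b‖₀ + t ‖c‖₁ : a = b + c}`. -/
def seqKfun {A : Type*} [NormedAddCommGroup A]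
    (norm₀ norm₁ : (ℤ → A) → ℝ≥0∞) (t : ℝ) (a : ℤ → A) : ℝ≥0∞ :=
  ⨅ b : ℤ → A, norm₀ b + ENNReal.ofReal t * norm₁ (fun n => a n - b n)
/-
Layer cake: `∫ k F = ∫_0^∞ (∫_{k > t} F) dt`. Because `k` is nonincreasing, each superlevel set
`{k > t}` is an initial segment of `(0, ∞)`, over which the integral of `F` is at most its length
times the maximal average `M`; integrating in `t` gives `∫ k F ≤ M ∫ k`.
-/

open Set

section InitialSegment

variable {f : ℝ → ℝ≥0∞} {M : ℝ≥0∞} {A : Set ℝ}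

theorem setLIntegral_le_mul_volume_of_bddAbove
    (hM : ∀ r, 0 < r → ∫⁻ s in Ioo 0 r, f s ≤ M * ENNReal.ofReal r)
    (hA : A ⊆ Ioi 0) (hAc : ∀ s ∈ A, Ioc 0 s ⊆ A) (hbdd : BddAbove A) :
    ∫⁻ s in A, f s ≤ M * volume A := by
  rcases A.eq_empty_or_nonempty with rfl | ⟨a, ha⟩
  · simp
  set r := sSup A
  have hr : 0 < r := (hA ha).trans_le (le_csSup hbdd ha)
  have hIoo : Ioo 0 r ⊆ A := fun s hs ↦ by
    obtain ⟨b, hb, hsb⟩ := exists_lt_of_lt_csSup ⟨a, ha⟩ hs.2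
    exact hAc b hb ⟨hs.1, hsb.le⟩
  have hIoc : A ⊆ Ioc 0 r := fun s hs ↦ ⟨hA hs, le_csSup hbdd hs⟩
  calc ∫⁻ s in A, f s ≤ ∫⁻ s in Ioc 0 r, f s := lintegral_mono_set hIoc
    _ = ∫⁻ s in Ioo 0 r, f s := setLIntegral_congr Ioo_ae_eq_Ioc.symm
    _ ≤ M * volume (Ioo 0 r) := by simpa using hM r hr
    _ ≤ M * volume A := by gcongr

theorem setLIntegral_le_mul_volume
    (hM : ∀ r, 0 < r → ∫⁻ s in Ioo 0 r, f s ≤ M * ENNReal.ofReal r)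
    (hA : A ⊆ Ioi 0) (hAc : ∀ s ∈ A, Ioc 0 s ⊆ A) :
    ∫⁻ s in A, f s ≤ M * volume A := by
  have hunion : ⋃ n : ℕ, A ∩ Iio (n : ℝ) = A := by
    rw [← inter_iUnion]
    exact inter_eq_left.2 fun x _ ↦ mem_iUnion.2 (exists_nat_gt x)
  have hdir : Directed (· ⊆ ·) fun n : ℕ ↦ A ∩ Iio (n : ℝ) :=
    Monotone.directed_le fun m n hmn ↦ inter_subset_inter_right _ (Iio_subset_Iio (Nat.mono_cast hmn))
  rw [← hunion, setLIntegral_iUnion_of_directed _ hdir, hunion]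
  refine iSup_le fun n ↦ ?_
  calc ∫⁻ s in A ∩ Iio (n : ℝ), f s ≤ M * volume (A ∩ Iio (n : ℝ)) :=
        setLIntegral_le_mul_volume_of_bddAbove hM (inter_subset_left.trans hA)
          (fun s hs t ht ↦ ⟨hAc s hs.1 ht, ht.2.trans_lt hs.2⟩) bddAbove_Iio.inter_of_right
    _ ≤ M * volume A := by gcongr; exact inter_subset_left

end InitialSegment

theorem lintegral_ofReal_le_mul_of_measure_lt_le {α : Type*} [MeasurableSpace α]
    {μ ν : Measure α} {k : α → ℝ} {M : ℝ≥0∞} (hk0 : 0 ≤ᵐ[ν] k) (hk : AEMeasurable k ν)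
    (hkμ0 : 0 ≤ᵐ[μ] k) (hkμ : AEMeasurable k μ)
    (h : ∀ t, 0 < t → ν {a | t < k a} ≤ M * μ {a | t < k a}) :
    ∫⁻ a, ENNReal.ofReal (k a) ∂ν ≤ M * ∫⁻ a, ENNReal.ofReal (k a) ∂μ := by
  have hmeas : Measurable fun t ↦ μ {a | t < k a} :=
    Antitone.measurable fun s t hst ↦ measure_mono fun a (ha : t < k a) ↦ hst.trans_lt ha
  rw [lintegral_eq_lintegral_meas_lt ν hk0 hk, lintegral_eq_lintegral_meas_lt μ hkμ0 hkμ,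
    ← lintegral_const_mul M hmeas]
  exact setLIntegral_mono' measurableSet_Ioi h

theorem lintegral_mul_le_mul_lintegral_of_antitoneOn {k : ℝ → ℝ} {f : ℝ → ℝ≥0∞} {M : ℝ≥0∞}
    (hk0 : ∀ s, 0 < s → 0 ≤ k s) (hk : AntitoneOn k (Ioi 0))
    (hf : AEMeasurable f (volume.restrict (Ioi 0)))
    (hM : ∀ r, 0 < r → ∫⁻ s in Ioo 0 r, f s ≤ M * ENNReal.ofReal r) :
    ∫⁻ s in Ioi 0, f s * ENNReal.ofReal (k s) ≤ M * ∫⁻ s in Ioi 0, ENNReal.ofReal (k s) := by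
  set μ := volume.restrict (Ioi (0 : ℝ))
  have hkμ0 : 0 ≤ᵐ[μ] k := (ae_restrict_iff' measurableSet_Ioi).2 (.of_forall hk0)
  have hkμ : AEMeasurable k μ := aemeasurable_restrict_of_antitoneOn measurableSet_Ioi hk
  have hac := withDensity_absolutelyContinuous μ f
  calc ∫⁻ s, f s * ENNReal.ofReal (k s) ∂μ = ∫⁻ s, ENNReal.ofReal (k s) ∂μ.withDensity f :=
        (lintegral_withDensity_eq_lintegral_mul₀ hf hkμ.ennreal_ofReal).symm
    _ ≤ M * ∫⁻ s, ENNReal.ofReal (k s) ∂μ := by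
      refine lintegral_ofReal_le_mul_of_measure_lt_le (hac.ae_le hkμ0) (hkμ.mono_ac hac) hkμ0 hkμ
        fun t _ ↦ ?_
      rw [withDensity_apply', Measure.restrict_restrict' measurableSet_Ioi,
        Measure.restrict_apply' measurableSet_Ioi]
      exact setLIntegral_le_mul_volume hM inter_subset_right
        fun s hs u hu ↦ ⟨(hs.1 : t < k s).trans_le (hk hu.1 hs.2 hu.2), hu.1⟩

theorem statement9_general (k F : ℝ → ℝ)
    (hk0 : ∀ s, 0 < s → 0 ≤ k s)
    (hkmono : ∀ s t : ℝ, 0 < s → s ≤ t → k t ≤ k s)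
    (hF : Measurable F) (hF0 : ∀ s, 0 ≤ F s) :
    (∫⁻ s in Set.Ioi (0 : ℝ), ENNReal.ofReal (k s * F s)) ≤
      2 * (⨆ r : {r : ℝ // 0 < r},
          (∫⁻ s in Set.Ioo (0 : ℝ) (r : ℝ), ENNReal.ofReal (F s)) / ENNReal.ofReal (r : ℝ)) *
        ∫⁻ s in Set.Ioi (0 : ℝ), ENNReal.ofReal (k s) := by
  set M := ⨆ r : {r : ℝ // 0 < r}, (∫⁻ s in Ioo 0 (r : ℝ), ENNReal.ofReal (F s)) / ENNReal.ofReal r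
  have hM : ∀ r, 0 < r → ∫⁻ s in Ioo 0 r, ENNReal.ofReal (F s) ≤ M * ENNReal.ofReal r :=
    fun r hr ↦ (ENNReal.div_le_iff (by simpa using hr) ENNReal.ofReal_ne_top).1
      (le_iSup_of_le ⟨r, hr⟩ le_rfl)
  calc ∫⁻ s in Ioi 0, ENNReal.ofReal (k s * F s)
      = ∫⁻ s in Ioi 0, ENNReal.ofReal (F s) * ENNReal.ofReal (k s) := by
        simp_rw [ENNReal.ofReal_mul' (hF0 _), mul_comm]
    _ ≤ M * ∫⁻ s in Ioi 0, ENNReal.ofReal (k s) :=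
        lintegral_mul_le_mul_lintegral_of_antitoneOn hk0 (fun s hs t _ hst ↦ hkmono s t hs hst)
          hF.ennreal_ofReal.aemeasurable hM
    _ ≤ 2 * M * ∫⁻ s in Ioi 0, ENNReal.ofReal (k s) := by
        gcongr; exact le_mul_of_one_le_left' one_le_two

/-- THEOREM 9 -/
theorem statement9 (k F : ℝ → ℝ)
    (hk0 : ∀ s, 0 < s → 0 ≤ k s)
    (hkmono : ∀ s t : ℝ, 0 < s → s ≤ t → k t ≤ k s)
    (hkint : IntegrableOn k (Set.Ioi 0) volume)
    (hF : Measurable F) (hF0 : ∀ s, 0 ≤ F s) :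
    (∫⁻ s in Set.Ioi (0 : ℝ), ENNReal.ofReal (k s * F s)) ≤
      2 * (⨆ r : {r : ℝ // 0 < r},
          (∫⁻ s in Set.Ioo (0 : ℝ) (r : ℝ), ENNReal.ofReal (F s)) / ENNReal.ofReal (r : ℝ)) *
        ∫⁻ s in Set.Ioi (0 : ℝ), ENNReal.ofReal (k s) :=
  statement9_general k F hk0 hkmono hF hF0
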